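/- Let K be symmetric positive semidefinite, s > 0, k_* ∈ ℝⁿ, κ ≥ 0 with [[κ, k_*ᵀ],[k_*, K]] positive semidefinite. Define v(α) = α·(κ - k_*ᵀ(K + (s/α)I)⁻¹k_*) for α ∈ (0,1]. Then v is nondecreasing in α. -/

import Mathlib

/-!
The posterior variance `α (κ - kₛᵀ (K + (s/α) I)⁻¹ kₛ)` is the least mean squared error
`α (κ - 2 kₛᵀ u + uᵀ K u) + s uᵀ u` of a linear predictor `uᵀ y` of `f(x_*)`, the minimum being
attained at `u = (K + (s/α) I)⁻¹ kₛ`. For each fixed `u` this error is affine in `α` with slope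
`κ - 2 kₛᵀ u + uᵀ K u ≥ 0` (the bordered matrix evaluated at `(1, -u)`), and a pointwise minimum
of nondecreasing functions is nondecreasing.
-/

open Matrix

namespace Matrix

variable {m : Type*} [Fintype m]

theorem PosSemidef.sub_two_mul_dotProduct_add_nonneg_of_fromBlocks {K : Matrix m m ℝ} {κ : ℝ}
    {k : m → ℝ}
    (hbord : (fromBlocks (of fun _ _ : Unit => κ) (of fun (_ : Unit) i => k i)
      (of fun i (_ : Unit) => k i) K).PosSemidef) (u : m → ℝ) :
    0 ≤ κ - 2 * (k ⬝ᵥ u) + u ⬝ᵥ K *ᵥ u := by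
  have h := hbord.dotProduct_mulVec_nonneg (Sum.elim (fun _ => 1) (-u))
  have hcorner : (fun _ => (1 : ℝ)) ⬝ᵥ (of fun _ _ : Unit => κ) *ᵥ (fun _ => 1) = κ := by
    simp [dotProduct, mulVec]
  have hrow : (fun _ => (1 : ℝ)) ⬝ᵥ (of fun (_ : Unit) i => k i) *ᵥ u = k ⬝ᵥ u := by
    simp [dotProduct, mulVec]
  have hcol : (of fun i (_ : Unit) => k i) *ᵥ (fun _ => (1 : ℝ)) = k := by
    ext; simp [mulVec, dotProduct]
  simp only [star_trivial, fromBlocks_mulVec, sumElim_dotProduct_sumElim, Sum.elim_comp_inl,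
    Sum.elim_comp_inr, dotProduct_add, hcorner, hrow, hcol, neg_dotProduct, mulVec_neg,
    dotProduct_neg, dotProduct_comm u k] at h
  linarith

variable [DecidableEq m]

/-- Expand `0 ≤ (u - A⁻¹ k)ᵀ A (u - A⁻¹ k)`. -/
theorem PosDef.two_mul_dotProduct_sub_le_dotProduct_inv_mulVec {A : Matrix m m ℝ}
    (hA : A.PosDef) (k u : m → ℝ) :
    2 * (k ⬝ᵥ u) - u ⬝ᵥ A *ᵥ u ≤ k ⬝ᵥ A⁻¹ *ᵥ k := by
  set w := A⁻¹ *ᵥ k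
  have hAw : A *ᵥ w = k := by
    simp [w, mulVec_mulVec, mul_nonsing_inv _ (A.isUnit_iff_isUnit_det.mp hA.isUnit)]
  have hwA : w ᵥ* A = k := by
    rw [← mulVec_transpose, ← conjTranspose_eq_transpose_of_trivial, hA.isHermitian.eq, hAw]
  have hsq := hA.posSemidef.dotProduct_mulVec_nonneg (u - w)
  simp only [star_trivial, mulVec_sub, dotProduct_sub, sub_dotProduct] at hsq
  rw [hAw, dotProduct_mulVec w, hwA, dotProduct_comm w k, dotProduct_comm u k] at hsq
  linarith

theorem PosDef.two_mul_dotProduct_inv_mulVec_sub_eq {A : Matrix m m ℝ} (hA : A.PosDef)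
    (k : m → ℝ) :
    2 * (k ⬝ᵥ A⁻¹ *ᵥ k) - (A⁻¹ *ᵥ k) ⬝ᵥ A *ᵥ A⁻¹ *ᵥ k = k ⬝ᵥ A⁻¹ *ᵥ k := by
  rw [mulVec_mulVec, mul_nonsing_inv _ (A.isUnit_iff_isUnit_det.mp hA.isUnit), one_mulVec,
    dotProduct_comm]
  ring

end Matrix

section GaussianProcess

variable {m : Type*} [Fintype m]

/-- Mean squared error of the linear predictor `uᵀ y` of `f(x_*)` from observations
`y = f(X) + ε`, where `(f(x_*), f(X))` has covariance `α • [[κ, kₛᵀ], [kₛ, K]]` and `ε` is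
independent noise of variance `s`. -/
def linearPredictorRisk (K : Matrix m m ℝ) (κ s : ℝ) (kstar : m → ℝ) (α : ℝ) (u : m → ℝ) : ℝ :=
  α * (κ - 2 * (kstar ⬝ᵥ u) + u ⬝ᵥ K *ᵥ u) + s * (u ⬝ᵥ u)

theorem linearPredictorRisk_mono {K : Matrix m m ℝ} {κ : ℝ} {kstar : m → ℝ}
    (hbord : (fromBlocks (of fun _ _ : Unit => κ) (of fun (_ : Unit) i => kstar i)
      (of fun i (_ : Unit) => kstar i) K).PosSemidef) (s : ℝ) (u : m → ℝ) :
    Monotone fun α => linearPredictorRisk K κ s kstar α u := fun _ _ h => by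
  have := hbord.sub_two_mul_dotProduct_add_nonneg_of_fromBlocks u
  simp only [linearPredictorRisk]
  gcongr

variable [DecidableEq m]

theorem linearPredictorRisk_eq {K : Matrix m m ℝ} {κ s α : ℝ} (kstar u : m → ℝ) (hα : α ≠ 0) :
    linearPredictorRisk K κ s kstar α u =
      α * (κ - (2 * (kstar ⬝ᵥ u) - u ⬝ᵥ (K + (s / α) • (1 : Matrix m m ℝ)) *ᵥ u)) := by
  simp only [linearPredictorRisk, add_mulVec, smul_mulVec, one_mulVec, dotProduct_add,
    dotProduct_smul, smul_eq_mul]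
  field_simp
  ring

noncomputable def predictiveVariance (K : Matrix m m ℝ) (κ s : ℝ) (kstar : m → ℝ) (α : ℝ) : ℝ :=
  α * (κ - kstar ⬝ᵥ (K + (s / α) • (1 : Matrix m m ℝ))⁻¹ *ᵥ kstar)

section

variable {K : Matrix m m ℝ} {κ s α : ℝ} (kstar : m → ℝ)

theorem predictiveVariance_le_linearPredictorRisk (hK : K.PosSemidef) (hs : 0 < s) (hα : 0 < α)
    (u : m → ℝ) : predictiveVariance K κ s kstar α ≤ linearPredictorRisk K κ s kstar α u := by
  have hA := PosDef.posSemidef_add hK (PosDef.one.smul (div_pos hs hα))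
  rw [linearPredictorRisk_eq kstar u hα.ne', predictiveVariance]
  gcongr
  exact hA.two_mul_dotProduct_sub_le_dotProduct_inv_mulVec kstar u

theorem predictiveVariance_eq_linearPredictorRisk (hK : K.PosSemidef) (hs : 0 < s) (hα : 0 < α) :
    predictiveVariance K κ s kstar α =
      linearPredictorRisk K κ s kstar α ((K + (s / α) • (1 : Matrix m m ℝ))⁻¹ *ᵥ kstar) := by
  have hA := PosDef.posSemidef_add hK (PosDef.one.smul (div_pos hs hα))
  rw [linearPredictorRisk_eq _ _ hα.ne', predictiveVariance,
    hA.two_mul_dotProduct_inv_mulVec_sub_eq]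

end

theorem predictiveVariance_monotoneOn {K : Matrix m m ℝ} {κ s : ℝ} {kstar : m → ℝ}
    (hK : K.PosSemidef) (hs : 0 < s)
    (hbord : (fromBlocks (of fun _ _ : Unit => κ) (of fun (_ : Unit) i => kstar i)
      (of fun i (_ : Unit) => kstar i) K).PosSemidef) :
    MonotoneOn (predictiveVariance K κ s kstar) (Set.Ioi 0) := by
  intro α₁ hα₁ α₂ hα₂ h12
  set w := (K + (s / α₂) • (1 : Matrix m m ℝ))⁻¹ *ᵥ kstar
  calc predictiveVariance K κ s kstar α₁
      ≤ linearPredictorRisk K κ s kstar α₁ w :=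
        predictiveVariance_le_linearPredictorRisk kstar hK hs hα₁ w
    _ ≤ linearPredictorRisk K κ s kstar α₂ w := linearPredictorRisk_mono hbord s w h12
    _ = predictiveVariance K κ s kstar α₂ :=
        (predictiveVariance_eq_linearPredictorRisk kstar hK hs hα₂).symm

end GaussianProcess

theorem predictive_variance_monotone_in_signal_general
    {n : ℕ} (K : Matrix (Fin n) (Fin n) ℝ) (κ s : ℝ) (kstar : Fin n → ℝ)
    (hK : K.PosSemidef) (hs : 0 < s)
    (hbord : (Matrix.fromBlocks
        (Matrix.of fun _ _ : Unit => κ)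
        (Matrix.of fun (_ : Unit) i => kstar i)
        (Matrix.of fun i (_ : Unit) => kstar i)
        K).PosSemidef) :
    ∀ α₁ ∈ Set.Ioc (0 : ℝ) 1, ∀ α₂ ∈ Set.Ioc (0 : ℝ) 1, α₁ ≤ α₂ →
      α₁ * (κ - kstar ⬝ᵥ (K + (s / α₁) • (1 : Matrix (Fin n) (Fin n) ℝ))⁻¹.mulVec kstar)
        ≤ α₂ * (κ - kstar ⬝ᵥ (K + (s / α₂) • (1 : Matrix (Fin n) (Fin n) ℝ))⁻¹.mulVec kstar) :=
  fun _ hα₁ _ hα₂ h12 => predictiveVariance_monotoneOn hK hs hbord hα₁.1 hα₂.1 h12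

theorem predictive_variance_monotone_in_signal
    {n : ℕ} (K : Matrix (Fin n) (Fin n) ℝ) (κ s : ℝ) (kstar : Fin n → ℝ)
    (hK : K.PosSemidef) (hκ : 0 ≤ κ) (hs : 0 < s)
    (hbord : (Matrix.fromBlocks
        (Matrix.of fun _ _ : Unit => κ)
        (Matrix.of fun (_ : Unit) i => kstar i)
        (Matrix.of fun i (_ : Unit) => kstar i)
        K).PosSemidef) :
    ∀ α₁ ∈ Set.Ioc (0 : ℝ) 1, ∀ α₂ ∈ Set.Ioc (0 : ℝ) 1, α₁ ≤ α₂ →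
      α₁ * (κ - kstar ⬝ᵥ (K + (s / α₁) • (1 : Matrix (Fin n) (Fin n) ℝ))⁻¹.mulVec kstar)
        ≤ α₂ * (κ - kstar ⬝ᵥ (K + (s / α₂) • (1 : Matrix (Fin n) (Fin n) ℝ))⁻¹.mulVec kstar) :=
  predictive_variance_monotone_in_signal_general K κ s kstar hK hs hbord
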